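/- Let Q : E → ℝ be convex on all of E, let V̄ be a nonempty subset of V, and let Φ be any partition of Ω. Then the restricted, partition-based master problem yields a valid lower bound on the true defender-attacker optimum: min_{x∈X} max_{v∈V̄} L_{x,v}(Q;Φ) ≤ min_{x∈X} max_{v∈V} E_{x,v}[Q∘ξ]. (Correctness of the lower bound produced by the restricted master problem in the paper's successive refinement algorithm; follows from Proposition 5 and restriction of the attacker's feasible set.) -/
import Mathlib


open Finset

/-- A partition of a finite type `Ω`: a finite collection of nonempty,
pairwise disjoint subsets of `Ω` whose union is all of `Ω`. -/
def IsPartition {Ω : Type*} [Fintype Ω] (Φ : Finset (Finset Ω)) : Prop :=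
  (∀ C ∈ Φ, C.Nonempty) ∧
    (∀ C ∈ Φ, ∀ D ∈ Φ, C ≠ D → Disjoint C D) ∧
      ∀ ω : Ω, ∃ C ∈ Φ, ω ∈ C

/-- `Φ` refines `Φ'`: every cell of `Φ` is contained in some cell of `Φ'`. -/
def Refines {Ω : Type*} (Φ Φ' : Finset (Finset Ω)) : Prop :=
  ∀ C ∈ Φ, ∃ C' ∈ Φ', C ⊆ C'

/-- Partition bound `L(f;Φ) = ∑_{C∈Φ} P(C) · f(ξ̄(C))`, where `P(C) = ∑_{ω∈C} p ω`
and `ξ̄(C) = P(C)⁻¹ • ∑_{ω∈C} p ω • ξ ω`. -/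
noncomputable def partBound {Ω : Type*} {E : Type*} [AddCommGroup E] [Module ℝ E]
    (p : Ω → ℝ) (ξ : Ω → E) (f : E → ℝ) (Φ : Finset (Finset Ω)) : ℝ :=
  ∑ C ∈ Φ, (∑ ω ∈ C, p ω) * f ((∑ ω ∈ C, p ω)⁻¹ • ∑ ω ∈ C, p ω • ξ ω)

/-- Expectation `E[f∘ξ] = ∑_{ω∈Ω} p ω · f (ξ ω)`. -/
noncomputable def expVal {Ω : Type*} [Fintype Ω] {E : Type*}
    (p : Ω → ℝ) (ξ : Ω → E) (f : E → ℝ) : ℝ :=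
  ∑ ω, p ω * f (ξ ω)


lemma cell_jensen {Ω E : Type*} [AddCommGroup E] [Module ℝ E]
    (p : Ω → ℝ) (hp : ∀ ω, 0 < p ω) (ξ : Ω → E) (Q : E → ℝ)
    (hQ : ConvexOn ℝ Set.univ Q) (C : Finset Ω) (hC : C.Nonempty) :
    (∑ ω ∈ C, p ω) * Q ((∑ ω ∈ C, p ω)⁻¹ • ∑ ω ∈ C, p ω • ξ ω)
      ≤ ∑ ω ∈ C, p ω * Q (ξ ω) := by
  have hw : 0 < ∑ ω ∈ C, p ω := Finset.sum_pos (fun ω _ => hp ω) hC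
  have h := hQ.map_centerMass_le (fun i _ => (hp i).le) hw (fun i _ => Set.mem_univ (ξ i))
  rw [Finset.centerMass, Finset.centerMass] at h
  calc (∑ ω ∈ C, p ω) * Q ((∑ ω ∈ C, p ω)⁻¹ • ∑ ω ∈ C, p ω • ξ ω)
      ≤ (∑ ω ∈ C, p ω) * ((∑ ω ∈ C, p ω)⁻¹ • ∑ ω ∈ C, p ω • (Q (ξ ω))) :=
        mul_le_mul_of_nonneg_left h hw.le
    _ = ∑ ω ∈ C, p ω * Q (ξ ω) := by
        rw [smul_eq_mul, ← mul_assoc, mul_inv_cancel₀ hw.ne', one_mul]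
        simp [smul_eq_mul]

lemma partBound_le_expVal {Ω E : Type*} [Fintype Ω] [AddCommGroup E] [Module ℝ E]
    (p : Ω → ℝ) (hp : ∀ ω, 0 < p ω) (ξ : Ω → E) (Q : E → ℝ)
    (hQ : ConvexOn ℝ Set.univ Q) (Φ : Finset (Finset Ω)) (hΦ : IsPartition Φ) :
    partBound p ξ Q Φ ≤ expVal p ξ Q := by
  classical
  obtain ⟨hne, hdisj, hcov⟩ := hΦ
  have hunion : Φ.biUnion id = Finset.univ := by
    apply Finset.eq_univ_of_forall
    intro ω
    obtain ⟨C, hC, hωC⟩ := hcov ω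
    exact Finset.mem_biUnion.2 ⟨C, hC, hωC⟩
  have hsum : ∑ C ∈ Φ, ∑ ω ∈ C, p ω * Q (ξ ω) = expVal p ξ Q := by
    rw [expVal, ← hunion]
    exact (Finset.sum_biUnion (fun C hC D hD hCD => hdisj C hC D hD hCD)).symm
  rw [← hsum, partBound]
  exact Finset.sum_le_sum fun C hC => cell_jensen p hp ξ Q hQ C (hne C hC)

/-- Correctness of the restricted master problem's lower bound: for convex `Q`,
a nonempty subset `V̄ ⊆ V` of attacker solutions, and any partition `Φ`,
`min_x max_{v ∈ V̄} L_{x,v}(Q;Φ) ≤ min_x max_{v ∈ V} E_{x,v}[Q∘ξ]`. -/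
theorem restricted_master_lb
    {Ω : Type*} [Fintype Ω] [Nonempty Ω]
    {X : Type*} [Fintype X] [Nonempty X]
    {V : Type*} [Fintype V] [Nonempty V]
    {E : Type*} [AddCommGroup E] [Module ℝ E]
    (p : X → V → Ω → ℝ) (hp_pos : ∀ x v ω, 0 < p x v ω)
    (hp_sum : ∀ x v, ∑ ω, p x v ω = 1)
    (ξ : Ω → E) (Q : E → ℝ) (hQ : ConvexOn ℝ Set.univ Q)
    (Vbar : Finset V) (hVbar : Vbar.Nonempty)
    (Φ : Finset (Finset Ω)) (hΦ : IsPartition Φ) :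
    (Finset.univ.inf' Finset.univ_nonempty fun x =>
        Vbar.sup' hVbar fun v => partBound (p x v) ξ Q Φ) ≤
      (Finset.univ.inf' Finset.univ_nonempty fun x =>
        Finset.univ.sup' Finset.univ_nonempty fun v => expVal (p x v) ξ Q) := by
  apply Finset.le_inf'
  intro x _
  refine le_trans (Finset.inf'_le _ (Finset.mem_univ x)) ?_
  apply Finset.sup'_le
  intro v hv
  refine le_trans (partBound_le_expVal (p x v) (hp_pos x v) ξ Q hQ Φ hΦ) ?_
  exact Finset.le_sup' (fun v => expVal (p x v) ξ Q) (Finset.mem_univ v)
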